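/- Let T be a balanced rooted tree with l levels where every vertex on level j has c_j children, and let n_j denote the number of vertices on level j (with n_0 = 0). Define polynomials W_0 = 1, W_1 = x, W_j = x·W_{j-1} - c_{l+1-j}·W_{j-2} for 2 ≤ j ≤ l. Then the characteristic polynomial of the adjacency matrix of T equals ∏_{j=1}^{l} W_j^{n_{l+1-j} - n_{l-j}}. -/

import Mathlib

/-!
Write `A` for the adjacency matrix, `P` for the parent-to-child incidence matrix (so `A = P + Pᵀ`)
and put `d v = W (l + 1 - lvl v) / W (l - lvl v)` in `ℚ(X)`. The three-term recurrence says exactly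
that `d u + ∑_{w child of u} (d w)⁻¹ = X` for every vertex `u`, and this is the identity
`X • 1 - A = L D Lᵀ` with `D = diagonal d` and `L = 1 - P D⁻¹`, which is unitriangular because
parents precede their children. Hence `charpoly A = ∏ v, d v`. Grouping the vertices by level, the
product telescopes to `∏ j, W j ^ (n_{l+1-j} - n_{l-j})`; the natural-number exponents are correct
because the parent map sends level `j + 1` onto level `j`, so `n_j ≤ n_{j+1}`.
-/

open Polynomial

/-- A rooted tree on the vertex set `Fin (n+1)`, encoded by a parent function:
the root is `0`, and every non-root vertex has a parent strictly smaller than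
itself (which guarantees acyclicity and connectedness). -/
structure ParentTree (n : ℕ) where
  parent : Fin (n + 1) → Fin (n + 1)
  parent_lt : ∀ i : Fin (n + 1), i ≠ 0 → parent i < i
  parent_zero : parent 0 = 0

namespace ParentTree

variable {n : ℕ}

/-- The set of children of a vertex. -/
def children (T : ParentTree n) (v : Fin (n + 1)) : Finset (Fin (n + 1)) :=
  Finset.univ.filter fun w => T.parent w = v ∧ w ≠ v

/-- The adjacency matrix of a rooted tree, with entries in `R`. -/
def adjMat (T : ParentTree n) (R : Type) [Zero R] [One R] :
    Matrix (Fin (n + 1)) (Fin (n + 1)) R :=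
  Matrix.of fun i j => if i ≠ j ∧ (T.parent i = j ∨ T.parent j = i) then 1 else 0

/-- The degree of a vertex. -/
def deg (T : ParentTree n) (v : Fin (n + 1)) : ℕ :=
  (T.children v).card + if v = 0 then 0 else 1

end ParentTree

open Finset Matrix

theorem Finset.prod_comp_eq_prod_pow_card {ι κ M : Type*} [CommMonoid M] [DecidableEq κ]
    (s : Finset ι) (t : Finset κ) (g : ι → κ) (f : κ → M) (h : ∀ i ∈ s, g i ∉ t → f (g i) = 1) :
    ∏ i ∈ s, f (g i) = ∏ j ∈ t, f j ^ #{i ∈ s | g i = j} := by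
  rw [← prod_filter_of_ne fun i hi hne => by_contra fun hi' => hne (h i hi hi'),
    ← prod_fiberwise_eq_prod_filter']
  simp only [prod_const]

theorem Polynomial.monic_and_natDegree_eq_of_recurrence {R : Type*} [CommRing R] [Nontrivial R]
    {W : ℕ → R[X]} {a : ℕ → R} {l : ℕ} (h0 : W 0 = 1) (h1 : W 1 = X)
    (hrec : ∀ j, 2 ≤ j → j ≤ l → W j = X * W (j - 1) - C (a j) * W (j - 2)) :
    ∀ j ≤ l, (W j).Monic ∧ (W j).natDegree = j := by
  intro j
  induction j using Nat.strong_induction_on with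
  | _ j ih =>
    match j with
    | 0 => exact fun _ => h0 ▸ ⟨monic_one, natDegree_one⟩
    | 1 => exact fun _ => h1 ▸ ⟨monic_X, natDegree_X⟩
    | j + 2 =>
      intro hj
      obtain ⟨hm₁, hd₁⟩ := ih (j + 1) (by omega) (by omega)
      obtain ⟨-, hd₀⟩ := ih j (by omega) (by omega)
      have hlead : (X * W (j + 1)).natDegree = j + 2 := by
        rw [monic_X.natDegree_mul hm₁, natDegree_X, hd₁]; omega
      have hlow : (C (a (j + 2)) * W j).natDegree < (X * W (j + 1)).natDegree := by
        rw [hlead]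
        exact (natDegree_C_mul_le _ _).trans_lt (by omega)
      rw [hrec (j + 2) (by omega) hj, Nat.add_sub_cancel, show j + 2 - 1 = j + 1 by omega]
      exact ⟨(monic_X.mul hm₁).sub_of_left (degree_lt_degree hlow),
        by rw [natDegree_sub_eq_left_of_natDegree_lt hlow, hlead]⟩

namespace ParentTree

variable {n : ℕ} (T : ParentTree n)

theorem mem_children {v w : Fin (n + 1)} : w ∈ T.children v ↔ T.parent w = v ∧ w ≠ v := by
  simp [children]

theorem lt_of_mem_children {v w : Fin (n + 1)} (h : w ∈ T.children v) : v < w := by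
  obtain ⟨rfl, hne⟩ := T.mem_children.1 h
  exact T.parent_lt w fun h0 => hne (by rw [h0, T.parent_zero])

theorem ne_zero_of_mem_children {v w : Fin (n + 1)} (h : w ∈ T.children v) : w ≠ 0 := by
  rintro rfl
  exact Fin.not_lt_zero v (T.lt_of_mem_children h)

def childMat (R : Type*) [Zero R] [One R] : Matrix (Fin (n + 1)) (Fin (n + 1)) R :=
  Matrix.of fun v w => if w ∈ T.children v then 1 else 0

theorem adjMat_eq_childMat_add_transpose (R : Type) [AddMonoidWithOne R] :
    T.adjMat R = T.childMat R + (T.childMat R)ᵀ := by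
  ext u v
  by_cases h₁ : v ∈ T.children u <;> by_cases h₂ : u ∈ T.children v
  · exact absurd (T.lt_of_mem_children h₁) (T.lt_of_mem_children h₂).not_gt
  all_goals
    simp only [adjMat, childMat, of_apply, Matrix.add_apply, transpose_apply, h₁, h₂]
    rw [mem_children] at h₁ h₂
    grind

theorem adjMat_map {R S : Type} [NonAssocSemiring R] [NonAssocSemiring S] (f : R →+* S) :
    (T.adjMat R).map f = T.adjMat S := by
  ext u v
  simp only [adjMat, map_apply, of_apply]
  split_ifs <;> simp

theorem childMat_mul_diagonal_mul_transpose {R : Type*} [CommSemiring R] (e : Fin (n + 1) → R) :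
    T.childMat R * diagonal e * (T.childMat R)ᵀ =
      diagonal fun v => ∑ w ∈ T.children v, e w := by
  ext u v
  rw [mul_apply]
  simp only [mul_diagonal, transpose_apply, childMat, of_apply]
  by_cases huv : u = v
  · subst huv
    simp
  · rw [diagonal_apply_ne _ huv]
    refine Finset.sum_eq_zero fun w _ => ?_
    have : ¬(w ∈ T.children u ∧ w ∈ T.children v) := fun ⟨hu, hv⟩ =>
      huv ((T.mem_children.1 hu).1.symm.trans (T.mem_children.1 hv).1)
    split_ifs <;> simp_all

theorem det_one_sub_childMat_mul_diagonal {R : Type*} [CommRing R] (e : Fin (n + 1) → R) :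
    (1 - T.childMat R * diagonal e).det = 1 := by
  rw [det_of_isUpperTriangular]
  · have : ∀ v, v ∉ T.children v := fun v h => (T.lt_of_mem_children h).ne rfl
    simp [childMat, this]
  · intro u v hvu
    have : v ∉ T.children u := fun h => (T.lt_of_mem_children h).not_gt hvu
    simp [childMat, this, one_apply_ne (show u ≠ v from hvu.ne')]

theorem det_diagonal_sub_adjMat {K : Type} [Field K] (d : Fin (n + 1) → K) (hd : ∀ v, d v ≠ 0) :
    (diagonal (fun v => d v + ∑ w ∈ T.children v, (d w)⁻¹) - T.adjMat K).det = ∏ v, d v := by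
  set P := T.childMat K
  set L := 1 - P * diagonal d⁻¹
  have hdd : diagonal d⁻¹ * diagonal d = 1 := by
    rw [diagonal_mul_diagonal, ← diagonal_one]
    exact congrArg diagonal (funext fun v => inv_mul_cancel₀ (hd v))
  have hdd' : diagonal d * diagonal d⁻¹ = 1 := by
    rw [diagonal_mul_diagonal, ← diagonal_one]
    exact congrArg diagonal (funext fun v => mul_inv_cancel₀ (hd v))
  have hPD : P * diagonal d⁻¹ * diagonal d = P := by rw [Matrix.mul_assoc, hdd, mul_one]
  have hDP : diagonal d * (diagonal d⁻¹ * Pᵀ) = Pᵀ := by rw [← Matrix.mul_assoc, hdd', one_mul]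
  have hLDL : diagonal (fun v => d v + ∑ w ∈ T.children v, (d w)⁻¹) - T.adjMat K =
      L * diagonal d * Lᵀ := by
    have hPDP := T.childMat_mul_diagonal_mul_transpose d⁻¹
    simp only [Pi.inv_apply] at hPDP
    rw [T.adjMat_eq_childMat_add_transpose, ← diagonal_add, ← hPDP]
    simp only [L, transpose_sub, transpose_one, transpose_mul, diagonal_transpose, sub_mul,
      mul_sub, one_mul, mul_one, hPD, hDP, Matrix.mul_assoc]
    abel
  rw [hLDL, det_mul, det_mul, det_transpose, T.det_one_sub_childMat_mul_diagonal, det_diagonal,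
    one_mul, mul_one]

theorem eval_charpoly_adjMat {K : Type} [Field K] (x : K) (d : Fin (n + 1) → K)
    (hd : ∀ v, d v ≠ 0) (hx : ∀ v, d v + ∑ w ∈ T.children v, (d w)⁻¹ = x) :
    (T.adjMat K).charpoly.eval x = ∏ v, d v := by
  rw [eval_charpoly, ← T.det_diagonal_sub_adjMat d hd, scalar_apply]
  simp only [hx]

section Levels

variable {lvl : Fin (n + 1) → ℕ} {l : ℕ} {c : ℕ → ℕ}

theorem one_le_lvl (hlvl0 : lvl 0 = 1) (hlvl : ∀ v, v ≠ 0 → lvl v = lvl (T.parent v) + 1)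
    (v : Fin (n + 1)) : 1 ≤ lvl v := by
  by_cases hv : v = 0
  · rw [hv, hlvl0]
  · rw [hlvl v hv]; omega

theorem lvl_of_mem_children (hlvl : ∀ v, v ≠ 0 → lvl v = lvl (T.parent v) + 1)
    {v w : Fin (n + 1)} (h : w ∈ T.children v) : lvl w = lvl v + 1 := by
  rw [hlvl w (T.ne_zero_of_mem_children h), (T.mem_children.1 h).1]

theorem exists_lvl_eq (hlvl0 : lvl 0 = 1) (hlvl : ∀ v, v ≠ 0 → lvl v = lvl (T.parent v) + 1)
    {j : ℕ} (hj : 1 ≤ j) (v : Fin (n + 1)) (hjv : j ≤ lvl v) : ∃ w, lvl w = j := by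
  induction v using WellFoundedLT.induction with
  | ind v ih =>
    rcases hjv.eq_or_lt with hjv | hjv
    · exact ⟨v, hjv.symm⟩
    · have hv : v ≠ 0 := by rintro rfl; omega
      exact ih _ (T.parent_lt v hv) (by rw [hlvl v hv] at hjv; omega)

theorem children_nonempty (hlvl0 : lvl 0 = 1)
    (hlvl : ∀ v, v ≠ 0 → lvl v = lvl (T.parent v) + 1) (hc : ∀ v, #(T.children v) = c (lvl v))
    {u v : Fin (n + 1)} (hvu : lvl v < lvl u) : (T.children v).Nonempty := by
  obtain ⟨w, hw⟩ := T.exists_lvl_eq hlvl0 hlvl (by omega) u hvu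
  have hw0 : w ≠ 0 := by rintro rfl; have := T.one_le_lvl hlvl0 hlvl v; omega
  have hw_mem : w ∈ T.children (T.parent w) := T.mem_children.2 ⟨rfl, (T.parent_lt w hw0).ne'⟩
  have hpw : lvl (T.parent w) = lvl v := by have := hlvl w hw0; omega
  rw [← card_pos, hc, ← hpw, ← hc]
  exact card_pos.2 ⟨w, hw_mem⟩

theorem card_lvl_le_card_lvl_succ (hlvl0 : lvl 0 = 1)
    (hlvl : ∀ v, v ≠ 0 → lvl v = lvl (T.parent v) + 1) (hc : ∀ v, #(T.children v) = c (lvl v))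
    {u : Fin (n + 1)} {j : ℕ} (hju : j < lvl u) :
    #{v | lvl v = j} ≤ #{v | lvl v = j + 1} := by
  rcases Nat.eq_zero_or_pos j with rfl | hj
  · have hroot : #{v | lvl v = 0} = 0 := card_eq_zero.2 <| filter_eq_empty_iff.2 fun v _ =>
      Nat.one_le_iff_ne_zero.1 (T.one_le_lvl hlvl0 hlvl v)
    omega
  refine card_le_card_of_surjOn T.parent fun v hv => ?_
  simp only [coe_filter, mem_univ, true_and, Set.mem_ofPred_eq] at hv
  obtain ⟨w, hw⟩ := T.children_nonempty hlvl0 hlvl hc (hv ▸ hju)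
  refine ⟨w, ?_, (T.mem_children.1 hw).1⟩
  simp [T.lvl_of_mem_children hlvl hw, hv]

theorem div_add_sum_children_inv_div {K : Type} [Field K]
    (hlvl : ∀ v, v ≠ 0 → lvl v = lvl (T.parent v) + 1) (hle : ∀ v, lvl v ≤ l)
    (hc : ∀ v, #(T.children v) = c (lvl v)) {x : K} {w : ℕ → K} (hw0 : w 0 = 1) (hw1 : w 1 = x)
    (hrec : ∀ j, 2 ≤ j → j ≤ l → w j = x * w (j - 1) - c (l + 1 - j) * w (j - 2))
    (hw : ∀ j ≤ l, w j ≠ 0) (u : Fin (n + 1)) (hu : 1 ≤ lvl u) :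
    w (l + 1 - lvl u) / w (l - lvl u) +
      ∑ v ∈ T.children u, (w (l + 1 - lvl v) / w (l - lvl v))⁻¹ = x := by
  have hchild : ∀ v ∈ T.children u, (w (l + 1 - lvl v) / w (l - lvl v))⁻¹ =
      w (l - lvl u - 1) / w (l - lvl u) := fun v hv => by
    rw [T.lvl_of_mem_children hlvl hv, inv_div, show l + 1 - (lvl u + 1) = l - lvl u by omega,
      show l - (lvl u + 1) = l - lvl u - 1 by omega]
  rw [sum_congr rfl hchild, sum_const, hc, nsmul_eq_mul]
  rcases (hle u).eq_or_lt with hul | hul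
  · have hleaf : T.children u = ∅ := eq_empty_of_forall_notMem fun v hv => by
      have := hle v; rw [T.lvl_of_mem_children hlvl hv] at this; omega
    rw [← hc, hleaf, hul, Nat.add_sub_cancel_left, Nat.sub_self, hw0, hw1]
    simp
  · obtain ⟨k, hk⟩ : ∃ k, l - lvl u = k + 1 := ⟨l - lvl u - 1, by omega⟩
    have hrec' := hrec (k + 2) (by omega) (by omega)
    rw [show l + 1 - (k + 2) = lvl u by omega, Nat.add_sub_cancel,
      show k + 2 - 1 = k + 1 by omega] at hrec'
    rw [show l + 1 - lvl u = k + 2 by omega, hk, Nat.add_sub_cancel, hrec']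
    field_simp [hw (k + 1) (by omega)]
    ring

theorem eval_charpoly_adjMat_mul_prod {K : Type} [Field K] (hlvl0 : lvl 0 = 1)
    (hlvl : ∀ v, v ≠ 0 → lvl v = lvl (T.parent v) + 1) (hle : ∀ v, lvl v ≤ l)
    (hc : ∀ v, #(T.children v) = c (lvl v)) {x : K} {w : ℕ → K} (hw0 : w 0 = 1) (hw1 : w 1 = x)
    (hrec : ∀ j, 2 ≤ j → j ≤ l → w j = x * w (j - 1) - c (l + 1 - j) * w (j - 2))
    (hw : ∀ j ≤ l, w j ≠ 0) :
    (T.adjMat K).charpoly.eval x * ∏ v, w (l - lvl v) = ∏ v, w (l + 1 - lvl v) := by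
  have hden : ∏ v, w (l - lvl v) ≠ 0 := prod_ne_zero_iff.2 fun v _ => hw _ (Nat.sub_le _ _)
  have hd : ∀ v, w (l + 1 - lvl v) / w (l - lvl v) ≠ 0 := fun v =>
    div_ne_zero (hw _ (by have := T.one_le_lvl hlvl0 hlvl v; omega)) (hw _ (Nat.sub_le _ _))
  have hx := fun u => T.div_add_sum_children_inv_div hlvl hle hc hw0 hw1 hrec hw u
    (T.one_le_lvl hlvl0 hlvl u)
  rw [T.eval_charpoly_adjMat x _ hd hx, prod_div_distrib, div_mul_cancel₀ _ hden]

theorem charpoly_adjMat_mul_prod {F : Type} [Field F] (hlvl0 : lvl 0 = 1)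
    (hlvl : ∀ v, v ≠ 0 → lvl v = lvl (T.parent v) + 1) (hle : ∀ v, lvl v ≤ l)
    (hc : ∀ v, #(T.children v) = c (lvl v)) {W : ℕ → F[X]} (hW0 : W 0 = 1) (hW1 : W 1 = X)
    (hWrec : ∀ j, 2 ≤ j → j ≤ l → W j = X * W (j - 1) - C ((c (l + 1 - j) : F)) * W (j - 2)) :
    (T.adjMat F).charpoly * ∏ v, W (l - lvl v) = ∏ v, W (l + 1 - lvl v) := by
  set φ := algebraMap F[X] (RatFunc F)
  have hφ : Function.Injective φ := IsFractionRing.injective F[X] (RatFunc F)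
  have hW : ∀ j ≤ l, φ (W j) ≠ 0 := fun j hj =>
    (map_ne_zero_iff φ hφ).2 (monic_and_natDegree_eq_of_recurrence hW0 hW1 hWrec j hj).1.ne_zero
  have hrec : ∀ j, 2 ≤ j → j ≤ l → φ (W j) =
      RatFunc.X * φ (W (j - 1)) - (c (l + 1 - j) : RatFunc F) * φ (W (j - 2)) := fun j h2 hj => by
    rw [hWrec j h2 hj, C_eq_natCast]
    simp [φ]
  have key := T.eval_charpoly_adjMat_mul_prod hlvl0 hlvl hle hc (w := φ ∘ W)
    (by simp [hW0]) (by simp [hW1, φ]) hrec hW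
  rw [← T.adjMat_map (algebraMap F (RatFunc F)), charpoly_map, eval_map_algebraMap,
    RatFunc.aeval_X_left_eq_algebraMap] at key
  exact hφ (by simpa only [map_mul, map_prod, Function.comp_apply] using key)

end Levels

end ParentTree

theorem stmt_9 {n : ℕ} (T : ParentTree n)
    (lvl : Fin (n + 1) → ℕ)
    (hlvl0 : lvl 0 = 1)
    (hlvl : ∀ v, v ≠ 0 → lvl v = lvl (T.parent v) + 1)
    (l : ℕ)
    (hle : ∀ v, lvl v ≤ l) (hmax : ∃ v, lvl v = l)
    (c : ℕ → ℕ)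
    (hc : ∀ v, (T.children v).card = c (lvl v))
    (W : ℕ → Polynomial ℚ)
    (hW0 : W 0 = 1) (hW1 : W 1 = Polynomial.X)
    (hWrec : ∀ j, 2 ≤ j → j ≤ l → W j = Polynomial.X * W (j - 1) - Polynomial.C ((c (l + 1 - j) : ℚ)) * W (j - 2)) :
    (T.adjMat ℚ).charpoly =
      ∏ j ∈ Finset.Icc 1 l,
        W j ^ ((Finset.univ.filter fun v => lvl v = l + 1 - j).card
                - (Finset.univ.filter fun v => lvl v = l - j).card) := by
  classical
  have hQ : ∏ v, W (l - lvl v) ≠ 0 := prod_ne_zero_iff.2 fun v _ =>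
    (monic_and_natDegree_eq_of_recurrence hW0 hW1 hWrec _ (Nat.sub_le _ _)).1.ne_zero
  refine mul_right_cancel₀ hQ
    ((T.charpoly_adjMat_mul_prod hlvl0 hlvl hle hc hW0 hW1 hWrec).trans ?_)
  have hlvl_mem : ∀ v, 1 ≤ lvl v ∧ lvl v ≤ l := fun v => ⟨T.one_le_lvl hlvl0 hlvl v, hle v⟩
  rw [prod_comp_eq_prod_pow_card univ (Icc 1 l) (fun v => l + 1 - lvl v) W
      fun v _ hv => absurd (mem_Icc.2 (by have := hlvl_mem v; omega)) hv,
    prod_comp_eq_prod_pow_card univ (Icc 1 l) (fun v => l - lvl v) W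
      fun v _ hv => by rw [show l - lvl v = 0 by simp only [mem_Icc] at hv; omega, hW0],
    ← prod_mul_distrib]
  refine prod_congr rfl fun j hj => ?_
  rw [mem_Icc] at hj
  obtain ⟨u, hu⟩ := hmax
  have hmono := T.card_lvl_le_card_lvl_succ hlvl0 hlvl hc (u := u) (j := l - j) (by omega)
  rw [show l - j + 1 = l + 1 - j by omega] at hmono
  rw [← pow_add]
  have hfib₁ : #{v | l + 1 - lvl v = j} = #{v | lvl v = l + 1 - j} :=
    congrArg card (filter_congr fun v _ => by have := hlvl_mem v; omega)
  have hfib₂ : #{v | l - lvl v = j} = #{v | lvl v = l - j} :=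
    congrArg card (filter_congr fun v _ => by have := hlvl_mem v; omega)
  rw [hfib₁, hfib₂, Nat.sub_add_cancel hmono]
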